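/- Let 0 < γ < 1, K > 0, and let l = ⌊1/γ − 1⌋ + 1. If l ≤ K and γK ≥ 1, then (1/γ)·∫_1^∞ exp(−K·u)·u^{1/γ−1} du ≤ (l+1)·exp(−K). -/

import Mathlib

/-!
Bound `u ^ (1/γ - 1)` by `u ^ l` on `u ≥ 1`. For natural exponents, integration by parts gives
`∫_a^∞ e^{-Ku} u^{n+1} du = (e^{-Ka} a^{n+1} + (n+1) ∫_a^∞ e^{-Ku} u^n du) / K`, and as long as
`n + 1 ≤ K a` the second term is at most the first, so induction yields
`∫_a^∞ e^{-Ku} u^n du ≤ (n+1) e^{-Ka} a^n / K`. Finally `1/γ ≤ K` absorbs the factor `1/K`.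
-/

open MeasureTheory Real Set Filter Topology

namespace ExpNegMulPow

variable {K : ℝ}

lemma integrableOn_exp_neg_mul_mul_pow (hK : 0 < K) (n : ℕ) :
    IntegrableOn (fun u : ℝ => exp (-K * u) * u ^ n) (Ioi 0) := by
  refine (integrableOn_rpow_mul_exp_neg_mul_rpow (p := 1) (s := n)
    (neg_one_lt_zero.trans_le n.cast_nonneg) one_pos hK).congr_fun (fun u _ => ?_) measurableSet_Ioi
  simp only [rpow_one, rpow_natCast, mul_comm]

lemma tendsto_exp_neg_mul_mul_pow_atTop (hK : 0 < K) (n : ℕ) :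
    Tendsto (fun u : ℝ => exp (-K * u) * u ^ n) atTop (𝓝 0) := by
  refine (tendsto_rpow_mul_exp_neg_mul_atTop_nhds_zero n K hK).congr fun u => ?_
  rw [rpow_natCast, mul_comm]

lemma hasDerivAt_exp_neg_mul_mul_pow_succ (K x : ℝ) (n : ℕ) :
    HasDerivAt (fun u : ℝ => exp (-K * u) * u ^ (n + 1))
      ((n + 1) * (exp (-K * x) * x ^ n) - K * (exp (-K * x) * x ^ (n + 1))) x := by
  have hexp : HasDerivAt (fun u : ℝ => exp (-K * u)) (-K * exp (-K * x)) x := by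
    simpa [mul_comm] using ((hasDerivAt_id x).const_mul (-K)).exp
  refine (hexp.mul (hasDerivAt_pow (n + 1) x)).congr_deriv ?_
  rw [Nat.add_sub_cancel]
  push_cast
  ring

lemma integral_Ioi_exp_neg_mul (hK : 0 < K) (a : ℝ) :
    ∫ u in Ioi a, exp (-K * u) = exp (-K * a) / K := by
  rw [integral_exp_mul_Ioi (neg_lt_zero.mpr hK), div_neg, neg_div, neg_neg]

lemma integral_Ioi_exp_neg_mul_mul_pow_succ (hK : 0 < K) {a : ℝ} (ha : 0 ≤ a) (n : ℕ) :
    ∫ u in Ioi a, exp (-K * u) * u ^ (n + 1) =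
      (exp (-K * a) * a ^ (n + 1) + (n + 1) * ∫ u in Ioi a, exp (-K * u) * u ^ n) / K := by
  have hint (m : ℕ) : IntegrableOn (fun u : ℝ => exp (-K * u) * u ^ m) (Ioi a) :=
    (integrableOn_exp_neg_mul_mul_pow hK m).mono_set (Ioi_subset_Ioi ha)
  have hftc := integral_Ioi_of_hasDerivAt_of_tendsto'
    (fun x _ => hasDerivAt_exp_neg_mul_mul_pow_succ K x n)
    (((hint n).const_mul _).sub ((hint (n + 1)).const_mul K))
    (tendsto_exp_neg_mul_mul_pow_atTop hK (n + 1))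
  rw [integral_sub ((hint n).const_mul _) ((hint (n + 1)).const_mul K), integral_const_mul,
    integral_const_mul] at hftc
  rw [eq_div_iff hK.ne']
  linarith

theorem integral_Ioi_exp_neg_mul_mul_pow_le (hK : 0 < K) {a : ℝ} (ha : 0 ≤ a) {n : ℕ}
    (hn : n ≤ K * a) :
    ∫ u in Ioi a, exp (-K * u) * u ^ n ≤ (n + 1) * (exp (-K * a) * a ^ n) / K := by
  induction n with
  | zero => simpa using (integral_Ioi_exp_neg_mul hK a).le
  | succ n ih =>
    push_cast at hn ⊢
    have hstep : ∫ u in Ioi a, exp (-K * u) * u ^ n ≤ exp (-K * a) * a ^ (n + 1) :=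
      calc ∫ u in Ioi a, exp (-K * u) * u ^ n
          ≤ (n + 1) / K * (exp (-K * a) * a ^ n) := by
            rw [div_mul_eq_mul_div]
            exact ih (by linarith)
        _ ≤ a * (exp (-K * a) * a ^ n) := by
            gcongr
            rwa [div_le_iff₀ hK, mul_comm]
        _ = exp (-K * a) * a ^ (n + 1) := by ring
    rw [integral_Ioi_exp_neg_mul_mul_pow_succ hK ha]
    gcongr
    linarith [mul_le_mul_of_nonneg_left hstep (by positivity : (0 : ℝ) ≤ n + 1)]

theorem integral_Ioi_one_exp_neg_mul_mul_rpow_le_pow (hK : 0 < K) {s : ℝ} {n : ℕ} (hs : s ≤ n) :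
    ∫ u in Ioi 1, exp (-K * u) * u ^ s ≤ ∫ u in Ioi 1, exp (-K * u) * u ^ n := by
  refine integral_mono_of_nonneg ?_
    ((integrableOn_exp_neg_mul_mul_pow hK n).mono_set (Ioi_subset_Ioi zero_le_one)) ?_
  all_goals filter_upwards [ae_restrict_mem measurableSet_Ioi] with u (hu : 1 < u)
  · have : 0 < u := one_pos.trans hu
    positivity
  · gcongr
    rw [← rpow_natCast]
    exact rpow_le_rpow_of_exponent_le hu.le hs

end ExpNegMulPow

open ExpNegMulPow

theorem stmt_7_general (γ K : ℝ)
    (l : ℕ) (hl : l = ⌊1 / γ - 1⌋₊ + 1) (hlK : (l : ℝ) ≤ K) (hγK : 1 ≤ γ * K) :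
    (1 / γ) * (∫ u in Set.Ioi (1 : ℝ), Real.exp (-K * u) * u ^ (1 / γ - 1)) ≤
      ((l : ℝ) + 1) * Real.exp (-K) := by
  have hK : 0 < K := by
    have : (1 : ℝ) ≤ l := by exact_mod_cast hl ▸ Nat.le_add_left 1 _
    linarith
  have hγ : 0 < γ := pos_of_mul_pos_left (one_pos.trans_le hγK) hK.le
  have hexp : 1 / γ - 1 ≤ l := by
    rw [hl]
    push_cast
    exact (Nat.lt_floor_add_one _).le
  have hγK' : 1 / γ ≤ K := by
    rwa [div_le_iff₀ hγ, mul_comm]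
  have hbound := integral_Ioi_exp_neg_mul_mul_pow_le hK zero_le_one (n := l) (by simpa using hlK)
  simp only [mul_one, one_pow] at hbound
  calc 1 / γ * ∫ u in Ioi 1, exp (-K * u) * u ^ (1 / γ - 1)
      ≤ 1 / γ * ((l + 1) * exp (-K) / K) := by
        gcongr
        exact (integral_Ioi_one_exp_neg_mul_mul_rpow_le_pow hK hexp).trans hbound
    _ ≤ K * ((l + 1) * exp (-K) / K) := by gcongr
    _ = (l + 1) * exp (-K) := by field_simp

/-- For `0 < γ < 1`, `K > 0`, `l = ⌊1/γ - 1⌋ + 1` with `l ≤ K` and `γK ≥ 1`,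
`(1/γ) ∫_1^∞ exp(-Ku) u^{1/γ-1} du ≤ (l+1) exp(-K)`. -/
theorem stmt_7 (γ K : ℝ) (hγ0 : 0 < γ) (hγ1 : γ < 1) (hK : 0 < K)
    (l : ℕ) (hl : l = ⌊1 / γ - 1⌋₊ + 1) (hlK : (l : ℝ) ≤ K) (hγK : 1 ≤ γ * K) :
    (1 / γ) * (∫ u in Set.Ioi (1 : ℝ), Real.exp (-K * u) * u ^ (1 / γ - 1)) ≤
      ((l : ℝ) + 1) * Real.exp (-K) :=
  stmt_7_general γ K l hl hlK hγK
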